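/- arXiv:2111.02176 — 6 statements merged into one kernel-verified Lean document; each statement's English description precedes it below -/
import Mathlib

section
/- Consider the single-neuron conductance-based model on [0,∞): c·v̇(t) = −μ_L(v(t)−ν_L) − Σ_{ion∈ℐ} μ_ion · m_ion(t)^{p_ion} · h_ion(t)^{q_ion} · (v(t)−ν_ion) + u(t), together with the gating equations τ_{m_ion}(v(t))·ṁ_ion(t) = −m_ion(t) + σ_{m_ion}(v(t)) and τ_{h_ion}(v(t))·ḣ_ion(t) = −h_ion(t) + σ_{h_ion}(v(t)) for each ion ∈ ℐ. Assume |u(t)| ≤ ū for all t ≥ 0, and define v̄ := max{ max_{ion∈ℐ} ν_ion , ū/μ_L + ν_L } and v̲ := min{ min_{ion∈ℐ} ν_ion , −ū/μ_L + ν_L }. If v(0) ∈ [v̲, v̄], m_ion(0) ∈ [0,1] and h_ion(0) ∈ [0,1] for all ion ∈ ℐ, then for every t ≥ 0 and every ion ∈ ℐ one has v(t) ∈ [v̲, v̄], m_ion(t) ∈ [0,1], and h_ion(t) ∈ [0,1]. -/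
open Real Set

/-! Barrier argument: outside its interval each state variable has its derivative pointing back
in. A gating variable relaxes towards a sigmoid value in `(0,1)` with positive time constant. Above
`v̄` every ionic current `μ m^p h^q (v - ν)` is outward and the leak current `μ_L (v - ν_L)`
exceeds `ū ≥ u`, so `v' < 0`; below `v̲` all signs are reversed. -/

theorem image_le_of_deriv_neg_above {f f' : ℝ → ℝ} {a B : ℝ}
    (hf : ∀ t ≥ a, HasDerivAt f (f' t) t) (ha : f a ≤ B)
    (bound : ∀ t ≥ a, B < f t → f' t < 0) : ∀ t ≥ a, f t ≤ B := by
  intro t ht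
  refine le_of_forall_pos_le_add fun ε hε => ?_
  exact image_le_of_deriv_right_lt_deriv_boundary (B := fun _ => B + ε) (B' := fun _ => 0)
    (fun x hx => (hf x hx.1).continuousAt.continuousWithinAt)
    (fun x hx => (hf x hx.1).hasDerivWithinAt) (by linarith) (fun _ => hasDerivAt_const _ _)
    (fun x hx hfx => bound x hx.1 (by linarith)) ⟨ht, le_rfl⟩

theorem le_image_of_deriv_pos_below {f f' : ℝ → ℝ} {a B : ℝ}
    (hf : ∀ t ≥ a, HasDerivAt f (f' t) t) (ha : B ≤ f a)
    (bound : ∀ t ≥ a, f t < B → 0 < f' t) : ∀ t ≥ a, B ≤ f t := by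
  intro t ht
  have := image_le_of_deriv_neg_above (f := -f) (f' := -f') (B := -B)
    (fun t ht => (hf t ht).neg) (neg_le_neg ha)
    (fun t ht hlt => neg_neg_of_pos (bound t ht (lt_of_neg_lt_neg hlt))) t ht
  exact neg_le_neg_iff.1 this

theorem relaxation_mem_Icc {y y' τ s : ℝ → ℝ} {lo hi : ℝ}
    (hy : ∀ t ≥ (0:ℝ), HasDerivAt y (y' t) t) (heq : ∀ t ≥ (0:ℝ), τ t * y' t = -y t + s t)
    (hτ : ∀ t ≥ (0:ℝ), 0 < τ t) (hs : ∀ t ≥ (0:ℝ), s t ∈ Icc lo hi) (h0 : y 0 ∈ Icc lo hi) :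
    ∀ t ≥ (0:ℝ), y t ∈ Icc lo hi := by
  intro t ht
  refine ⟨le_image_of_deriv_pos_below hy h0.1 (fun t ht hlt => ?_) t ht,
    image_le_of_deriv_neg_above hy h0.2 (fun t ht hlt => ?_) t ht⟩
  · refine pos_of_mul_pos_right (a := τ t) ?_ (hτ t ht).le
    linarith [heq t ht, (hs t ht).1]
  · refine neg_of_mul_neg_right (a := τ t) ?_ (hτ t ht).le
    linarith [heq t ht, (hs t ht).2]

theorem voltage_le {ι : Type*} [Fintype ι] {c μL νL ubar vbar : ℝ} {ν : ι → ℝ}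
    {g : ι → ℝ → ℝ} {u v v' : ℝ → ℝ} (hc : 0 < c) (hμL : 0 < μL)
    (hg : ∀ i, ∀ t ≥ (0:ℝ), 0 ≤ g i t) (hu : ∀ t ≥ (0:ℝ), u t ≤ ubar)
    (hν : ∀ i, ν i ≤ vbar) (hleak : ubar / μL + νL ≤ vbar)
    (hv : ∀ t ≥ (0:ℝ), HasDerivAt v (v' t) t)
    (heq : ∀ t ≥ (0:ℝ), c * v' t = -(μL * (v t - νL)) - ∑ i, g i t * (v t - ν i) + u t)
    (h0 : v 0 ≤ vbar) : ∀ t ≥ (0:ℝ), v t ≤ vbar := by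
  refine image_le_of_deriv_neg_above hv h0 fun t ht hlt => ?_
  have hionic : 0 ≤ ∑ i, g i t * (v t - ν i) :=
    Finset.sum_nonneg fun i _ => mul_nonneg (hg i t ht) (by linarith [hν i])
  have hleak' : ubar < μL * (v t - νL) := by
    rw [div_add' _ _ _ hμL.ne', div_le_iff₀ hμL] at hleak
    nlinarith
  refine neg_of_mul_neg_right (a := c) ?_ hc.le
  linarith [heq t ht, hu t ht]

theorem le_voltage {ι : Type*} [Fintype ι] {c μL νL ubar vlow : ℝ} {ν : ι → ℝ}
    {g : ι → ℝ → ℝ} {u v v' : ℝ → ℝ} (hc : 0 < c) (hμL : 0 < μL)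
    (hg : ∀ i, ∀ t ≥ (0:ℝ), 0 ≤ g i t) (hu : ∀ t ≥ (0:ℝ), -ubar ≤ u t)
    (hν : ∀ i, vlow ≤ ν i) (hleak : vlow ≤ -(ubar / μL) + νL)
    (hv : ∀ t ≥ (0:ℝ), HasDerivAt v (v' t) t)
    (heq : ∀ t ≥ (0:ℝ), c * v' t = -(μL * (v t - νL)) - ∑ i, g i t * (v t - ν i) + u t)
    (h0 : vlow ≤ v 0) : ∀ t ≥ (0:ℝ), vlow ≤ v t := by
  have heq_neg : ∀ t ≥ (0:ℝ), c * (-v') t =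
      -(μL * ((-v) t - -νL)) - ∑ i, g i t * ((-v) t - (-ν) i) + (-u) t := fun t ht => by
    simp only [Pi.neg_apply, neg_sub_neg, ← neg_sub (v t), mul_neg, Finset.sum_neg_distrib]
    linarith [heq t ht]
  have := voltage_le hc hμL hg (fun t ht => neg_le.1 (hu t ht)) (fun i => neg_le_neg (hν i))
    (by linarith) (fun t ht => (hv t ht).neg) heq_neg (neg_le_neg h0)
  exact fun t ht => neg_le_neg_iff.1 (this t ht)

theorem one_div_one_add_exp_mem_Ioo (y : ℝ) : 1 / (1 + exp y) ∈ Ioo (0:ℝ) 1 := by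
  rw [← neg_neg y, one_div, ← sigmoid_def]
  exact ⟨sigmoid_pos _, sigmoid_lt_one _⟩

theorem bell_pos {lo hi : ℝ} (y : ℝ) (hlo : 0 < lo ∧ lo ≤ hi) : 0 < lo + (hi - lo) * exp y :=
  add_pos_of_pos_of_nonneg hlo.1 (mul_nonneg (sub_nonneg.2 hlo.2) (exp_pos y).le)

theorem conductance_model_invariant_set_general
    {ι : Type} [Fintype ι]
    -- constants
    (c μL νL ubar : ℝ) (hc : 0 < c) (hμL : 0 < μL)
    (μ ν : ι → ℝ) (p q : ι → ℕ) (hμ : ∀ i, 0 < μ i)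
    -- sigmoid activation functions
    (ρm ρh κm κh : ι → ℝ)
    (σm σh : ι → ℝ → ℝ)
    (hσm : ∀ i x, σm i x = 1 / (1 + exp (-(x - ρm i) / κm i)))
    (hσh : ∀ i x, σh i x = 1 / (1 + exp (-(x - ρh i) / κh i)))
    -- bell-shaped time-constant functions
    (τmlo τmhi ζm χm τhlo τhhi ζh χh : ι → ℝ)
    (hτm : ∀ i, 0 < τmlo i ∧ τmlo i ≤ τmhi i)
    (hτh : ∀ i, 0 < τhlo i ∧ τhlo i ≤ τhhi i)
    (τm τh : ι → ℝ → ℝ)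
    (hτmdef : ∀ i x, τm i x = τmlo i + (τmhi i - τmlo i) * exp (-(x - ζm i) ^ 2 / (χm i) ^ 2))
    (hτhdef : ∀ i x, τh i x = τhlo i + (τhhi i - τhlo i) * exp (-(x - ζh i) ^ 2 / (χh i) ^ 2))
    -- bounded continuous input
    (u : ℝ → ℝ) (hu_bdd : ∀ t ≥ (0:ℝ), |u t| ≤ ubar)
    -- a solution of the ODE system on [0,∞)
    (v : ℝ → ℝ) (m h : ι → ℝ → ℝ) (v' : ℝ → ℝ) (m' h' : ι → ℝ → ℝ)
    (hv : ∀ t ≥ (0:ℝ), HasDerivAt v (v' t) t)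
    (hveq : ∀ t ≥ (0:ℝ), c * v' t =
      -(μL * (v t - νL)) - (∑ i, μ i * (m i t) ^ (p i) * (h i t) ^ (q i) * (v t - ν i)) + u t)
    (hm : ∀ i, ∀ t ≥ (0:ℝ), HasDerivAt (m i) (m' i t) t)
    (hmeq : ∀ i, ∀ t ≥ (0:ℝ), τm i (v t) * m' i t = -(m i t) + σm i (v t))
    (hh : ∀ i, ∀ t ≥ (0:ℝ), HasDerivAt (h i) (h' i t) t)
    (hheq : ∀ i, ∀ t ≥ (0:ℝ), τh i (v t) * h' i t = -(h i t) + σh i (v t))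
    -- the voltage bounds
    (vbar vlow : ℝ)
    (hvbar : vbar = max (⨆ i, ν i) (ubar / μL + νL))
    (hvlow : vlow = min (⨅ i, ν i) (-(ubar / μL) + νL))
    -- initial conditions
    (hv0 : v 0 ∈ Icc vlow vbar)
    (hm0 : ∀ i, m i 0 ∈ Icc (0:ℝ) 1) (hh0 : ∀ i, h i 0 ∈ Icc (0:ℝ) 1) :
    ∀ t ≥ (0:ℝ), ∀ i, v t ∈ Icc vlow vbar ∧ m i t ∈ Icc (0:ℝ) 1 ∧ h i t ∈ Icc (0:ℝ) 1 := by
  have hm01 : ∀ i, ∀ t ≥ (0:ℝ), m i t ∈ Icc (0:ℝ) 1 := fun i =>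
    relaxation_mem_Icc (hm i) (hmeq i) (fun t _ => hτmdef i _ ▸ bell_pos _ (hτm i))
      (fun t _ => hσm i _ ▸ Ioo_subset_Icc_self (one_div_one_add_exp_mem_Ioo _)) (hm0 i)
  have hh01 : ∀ i, ∀ t ≥ (0:ℝ), h i t ∈ Icc (0:ℝ) 1 := fun i =>
    relaxation_mem_Icc (hh i) (hheq i) (fun t _ => hτhdef i _ ▸ bell_pos _ (hτh i))
      (fun t _ => hσh i _ ▸ Ioo_subset_Icc_self (one_div_one_add_exp_mem_Ioo _)) (hh0 i)
  have hg : ∀ i, ∀ t ≥ (0:ℝ), 0 ≤ μ i * m i t ^ p i * h i t ^ q i := fun i t ht =>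
    mul_nonneg (mul_nonneg (hμ i).le (pow_nonneg (hm01 i t ht).1 _)) (pow_nonneg (hh01 i t ht).1 _)
  have hν_le : ∀ i, ν i ≤ vbar := fun i =>
    hvbar ▸ le_max_of_le_left (le_ciSup (finite_range ν).bddAbove i)
  have hle_ν : ∀ i, vlow ≤ ν i := fun i =>
    hvlow ▸ min_le_of_left_le (ciInf_le (finite_range ν).bddBelow i)
  have hv_le : ∀ t ≥ (0:ℝ), v t ≤ vbar :=
    voltage_le hc hμL hg (fun t ht => (abs_le.1 (hu_bdd t ht)).2) hν_le
      (hvbar ▸ le_max_right _ _) hv hveq hv0.2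
  have hle_v : ∀ t ≥ (0:ℝ), vlow ≤ v t :=
    le_voltage hc hμL hg (fun t ht => (abs_le.1 (hu_bdd t ht)).1) hle_ν
      (hvlow ▸ min_le_right _ _) hv hveq hv0.1
  exact fun t ht i => ⟨⟨hle_v t ht, hv_le t ht⟩, hm01 i t ht, hh01 i t ht⟩

/-- Lemma 1 of the paper: positive invariance of the set
`[v̲, v̄] × [0,1]^ℐ × [0,1]^ℐ` for a single-neuron conductance-based model. -/
theorem conductance_model_invariant_set
    {ι : Type} [Fintype ι] [Nonempty ι]
    -- constants
    (c μL νL ubar : ℝ) (hc : 0 < c) (hμL : 0 < μL)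
    (μ ν : ι → ℝ) (p q : ι → ℕ) (hμ : ∀ i, 0 < μ i)
    -- sigmoid activation functions
    (ρm ρh κm κh : ι → ℝ) (hκm : ∀ i, 0 < κm i) (hκh : ∀ i, κh i < 0)
    (σm σh : ι → ℝ → ℝ)
    (hσm : ∀ i x, σm i x = 1 / (1 + exp (-(x - ρm i) / κm i)))
    (hσh : ∀ i x, σh i x = 1 / (1 + exp (-(x - ρh i) / κh i)))
    -- bell-shaped time-constant functions
    (τmlo τmhi ζm χm τhlo τhhi ζh χh : ι → ℝ)
    (hτm : ∀ i, 0 < τmlo i ∧ τmlo i ≤ τmhi i) (hχm : ∀ i, χm i ≠ 0)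
    (hτh : ∀ i, 0 < τhlo i ∧ τhlo i ≤ τhhi i) (hχh : ∀ i, χh i ≠ 0)
    (τm τh : ι → ℝ → ℝ)
    (hτmdef : ∀ i x, τm i x = τmlo i + (τmhi i - τmlo i) * exp (-(x - ζm i) ^ 2 / (χm i) ^ 2))
    (hτhdef : ∀ i x, τh i x = τhlo i + (τhhi i - τhlo i) * exp (-(x - ζh i) ^ 2 / (χh i) ^ 2))
    -- bounded continuous input
    (u : ℝ → ℝ) (hu_cont : ContinuousOn u (Ici 0)) (hu_bdd : ∀ t ≥ (0:ℝ), |u t| ≤ ubar)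
    -- a solution of the ODE system on [0,∞)
    (v : ℝ → ℝ) (m h : ι → ℝ → ℝ) (v' : ℝ → ℝ) (m' h' : ι → ℝ → ℝ)
    (hv : ∀ t ≥ (0:ℝ), HasDerivAt v (v' t) t)
    (hveq : ∀ t ≥ (0:ℝ), c * v' t =
      -(μL * (v t - νL)) - (∑ i, μ i * (m i t) ^ (p i) * (h i t) ^ (q i) * (v t - ν i)) + u t)
    (hm : ∀ i, ∀ t ≥ (0:ℝ), HasDerivAt (m i) (m' i t) t)
    (hmeq : ∀ i, ∀ t ≥ (0:ℝ), τm i (v t) * m' i t = -(m i t) + σm i (v t))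
    (hh : ∀ i, ∀ t ≥ (0:ℝ), HasDerivAt (h i) (h' i t) t)
    (hheq : ∀ i, ∀ t ≥ (0:ℝ), τh i (v t) * h' i t = -(h i t) + σh i (v t))
    -- the voltage bounds
    (vbar vlow : ℝ)
    (hvbar : vbar = max (⨆ i, ν i) (ubar / μL + νL))
    (hvlow : vlow = min (⨅ i, ν i) (-(ubar / μL) + νL))
    -- initial conditions
    (hv0 : v 0 ∈ Icc vlow vbar)
    (hm0 : ∀ i, m i 0 ∈ Icc (0:ℝ) 1) (hh0 : ∀ i, h i 0 ∈ Icc (0:ℝ) 1) :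
    ∀ t ≥ (0:ℝ), ∀ i, v t ∈ Icc vlow vbar ∧ m i t ∈ Icc (0:ℝ) 1 ∧ h i t ∈ Icc (0:ℝ) 1 :=
  conductance_model_invariant_set_general c μL νL ubar hc hμL μ ν p q hμ ρm ρh κm κh σm σh hσm hσh
    τmlo τmhi ζm χm τhlo τhhi ζh χh hτm hτh τm τh hτmdef hτhdef u hu_bdd v m h v' m' h' hv hveq hm
    hmeq hh hheq vbar vlow hvbar hvlow hv0 hm0 hh0
end

section
/- Let σ(v) = 1/(1+exp(−(v−ρ)/κ)) be a sigmoid and let τ(v) = τ̲ + (τ̄−τ̲)·exp(−(v−ζ)²/χ²) be a bell-shaped time-constant function, so that 0 < τ̲ ≤ τ(v) ≤ τ̄ for all v. Let v : [0,∞) → ℝ be continuous, and let x₁, x₂ : [0,∞) → ℝ be two differentiable solutions of τ(v(t))·ẋ(t) = −x(t) + σ(v(t)). Then |x₁(t) − x₂(t)| ≤ e^{−t/τ̄} · |x₁(0) − x₂(0)| for all t ≥ 0; in particular the gating dynamics is globally exponentially contracting, uniformly in v and in the parameters ρ, κ, ζ, χ. -/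
open Real Set

/-!
Writing `y = x₁ - x₂`, the input `σ (v t)` cancels and `τ (v t) * ẏ = -y`. Since `0 < τ ≤ τ̄`,
this gives `y * ẏ = -y² / τ ≤ -y² / τ̄`, so `(e^{t/τ̄} y)²` has nonpositive derivative and is
antitone on `[0, ∞)`.
-/

theorem add_sub_mul_mem_Icc {a b e : ℝ} (hab : a ≤ b) (he₀ : 0 ≤ e) (he₁ : e ≤ 1) :
    a + (b - a) * e ∈ Icc a b :=
  ⟨by nlinarith, by nlinarith⟩

theorem exp_neg_sq_div_sq_mem_Icc (x ζ χ : ℝ) : exp (-(x - ζ) ^ 2 / χ ^ 2) ∈ Icc 0 1 :=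
  ⟨(exp_pos _).le, exp_le_one_iff.mpr <| div_nonpos_of_nonpos_of_nonneg
    (neg_nonpos.mpr (sq_nonneg _)) (sq_nonneg _)⟩

theorem mul_le_neg_sq_div_of_mul_eq_neg {a T y d : ℝ} (ha : 0 < a) (haT : a ≤ T)
    (h : a * d = -y) : y * d ≤ -y ^ 2 / T := by
  have hd : d = -y / a := by field_simp; linarith
  calc y * d = -(y ^ 2 / a) := by rw [hd]; ring
    _ ≤ -(y ^ 2 / T) := neg_le_neg (div_le_div_of_nonneg_left (sq_nonneg y) ha haT)
    _ = -y ^ 2 / T := by ring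

section Dissipative

variable {y y' : ℝ → ℝ} {T : ℝ}

theorem antitoneOn_sq_exp_mul_of_mul_deriv_le (hy : ∀ t ≥ 0, HasDerivAt y (y' t) t)
    (hdiss : ∀ t ≥ 0, y t * y' t ≤ -y t ^ 2 / T) :
    AntitoneOn (fun t ↦ (exp (t / T) * y t) ^ 2) (Ici 0) := by
  have hderiv : ∀ t ≥ 0, HasDerivAt (fun t ↦ (exp (t / T) * y t) ^ 2)
      (2 * exp (t / T) ^ 2 * (y t ^ 2 / T + y t * y' t)) t := by
    intro t ht
    have hexp : HasDerivAt (fun t ↦ exp (t / T)) (exp (t / T) * (1 / T)) t :=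
      ((hasDerivAt_id t).div_const T).exp
    refine ((hexp.fun_mul (hy t ht)).fun_pow 2).congr_deriv ?_
    ring
  refine antitoneOn_of_hasDerivWithinAt_nonpos (convex_Ici 0)
    (fun t ht ↦ (hderiv t ht).continuousAt.continuousWithinAt)
    (fun t ht ↦ (hderiv t (interior_subset ht)).hasDerivWithinAt) fun t ht ↦ ?_
  have hsum : y t ^ 2 / T + y t * y' t ≤ 0 := by
    have := hdiss t (interior_subset ht)
    rw [neg_div] at this
    linarith
  exact mul_nonpos_of_nonneg_of_nonpos (by positivity) hsum

theorem abs_le_exp_mul_abs_of_mul_deriv_le (hy : ∀ t ≥ 0, HasDerivAt y (y' t) t)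
    (hdiss : ∀ t ≥ 0, y t * y' t ≤ -y t ^ 2 / T) :
    ∀ t ≥ 0, |y t| ≤ exp (-t / T) * |y 0| := by
  intro t ht
  have hsq : (exp (t / T) * y t) ^ 2 ≤ y 0 ^ 2 := by
    simpa using antitoneOn_sq_exp_mul_of_mul_deriv_le hy hdiss self_mem_Ici ht ht
  have habs : exp (t / T) * |y t| ≤ |y 0| := by
    simpa [abs_mul, abs_of_pos (exp_pos _)] using sq_le_sq.mp hsq
  rw [neg_div, exp_neg, inv_mul_eq_div, le_div_iff₀ (exp_pos _)]
  linarith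

end Dissipative

theorem gating_dynamics_contracting_general
    (ζ χ τlo τhi : ℝ)
    (hτlo : 0 < τlo) (hτle : τlo ≤ τhi)
    (σ τ : ℝ → ℝ)
    (hτdef : ∀ x, τ x = τlo + (τhi - τlo) * exp (-(x - ζ) ^ 2 / χ ^ 2))
    (v : ℝ → ℝ)
    (x₁ x₂ x₁' x₂' : ℝ → ℝ)
    (hx₁ : ∀ t ≥ (0:ℝ), HasDerivAt x₁ (x₁' t) t)
    (hode₁ : ∀ t ≥ (0:ℝ), τ (v t) * x₁' t = -(x₁ t) + σ (v t))
    (hx₂ : ∀ t ≥ (0:ℝ), HasDerivAt x₂ (x₂' t) t)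
    (hode₂ : ∀ t ≥ (0:ℝ), τ (v t) * x₂' t = -(x₂ t) + σ (v t)) :
    ∀ t ≥ (0:ℝ), |x₁ t - x₂ t| ≤ exp (-t / τhi) * |x₁ 0 - x₂ 0| := by
  have hτ : ∀ x, τ x ∈ Icc τlo τhi := fun x ↦ by
    obtain ⟨he₀, he₁⟩ := exp_neg_sq_div_sq_mem_Icc x ζ χ
    exact hτdef x ▸ add_sub_mul_mem_Icc hτle he₀ he₁
  refine abs_le_exp_mul_abs_of_mul_deriv_le (y' := fun t ↦ x₁' t - x₂' t)
    (fun t ht ↦ (hx₁ t ht).sub (hx₂ t ht)) fun t ht ↦ ?_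
  refine mul_le_neg_sq_div_of_mul_eq_neg (hτlo.trans_le (hτ (v t)).1) (hτ (v t)).2 ?_
  linear_combination hode₁ t ht - hode₂ t ht

/-- Lemma 2 of the paper: the gating dynamics
`τ(v(t))·ẋ = −x + σ(v(t))` is globally exponentially contracting with rate `1/τ̄`,
uniformly in `v` and in the parameters `ρ, κ, ζ, χ`. -/
theorem gating_dynamics_contracting
    (ρ κ ζ χ τlo τhi : ℝ) (hκ : κ ≠ 0) (hχ : χ ≠ 0)
    (hτlo : 0 < τlo) (hτle : τlo ≤ τhi)
    (σ τ : ℝ → ℝ)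
    (hσ : ∀ x, σ x = 1 / (1 + exp (-(x - ρ) / κ)))
    (hτdef : ∀ x, τ x = τlo + (τhi - τlo) * exp (-(x - ζ) ^ 2 / χ ^ 2))
    (v : ℝ → ℝ) (hv : ContinuousOn v (Ici 0))
    (x₁ x₂ x₁' x₂' : ℝ → ℝ)
    (hx₁ : ∀ t ≥ (0:ℝ), HasDerivAt x₁ (x₁' t) t)
    (hode₁ : ∀ t ≥ (0:ℝ), τ (v t) * x₁' t = -(x₁ t) + σ (v t))
    (hx₂ : ∀ t ≥ (0:ℝ), HasDerivAt x₂ (x₂' t) t)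
    (hode₂ : ∀ t ≥ (0:ℝ), τ (v t) * x₂' t = -(x₂ t) + σ (v t)) :
    ∀ t ≥ (0:ℝ), |x₁ t - x₂ t| ≤ exp (-t / τhi) * |x₁ 0 - x₂ 0| :=
  gating_dynamics_contracting_general ζ χ τlo τhi hτlo hτle σ τ hτdef v x₁ x₂ x₁' x₂' hx₁ hode₁ hx₂
    hode₂
end

section
/- Let A : ℝ^{n_v} → ℝ^{n_w×n_w} and b : ℝ^{n_v} → ℝ^{n_w} be continuous, and suppose there exist a symmetric positive-definite matrix M_w and λ_w > 0 such that A(v)ᵀ M_w + M_w A(v) ⪯ −λ_w M_w for all v ∈ ℝ^{n_v}. Then for any continuous v : [0,∞) → ℝ^{n_v}, any two differentiable solutions w, ŵ : [0,∞) → ℝ^{n_w} of ẇ(t) = A(v(t))·w(t) + b(v(t)) satisfy ‖ŵ(t) − w(t)‖_{M_w} ≤ e^{−(λ_w/2)·t} · ‖ŵ(0) − w(0)‖_{M_w} for all t ≥ 0. In particular, the copy system ŵ̇ = A(v)ŵ + b(v) is a globally exponentially convergent reduced-order observer: ŵ(t) → w(t) exponentially as t → ∞, for any initial conditions. -/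
/-! The error `e = ŵ - w` solves the linear equation `ė = A(v) e`, so `V = eᵀ M_w e` satisfies
`V̇ = eᵀ (A(v)ᵀ M_w + M_w A(v)) e ≤ -λ_w V`. Grönwall's inequality gives
`V t ≤ e^{-λ_w t} V 0`, and taking square roots gives the bound. -/

open Matrix Real Set

/-- The weighted norm `‖x‖_M = √(xᵀ M x)`. -/
noncomputable def qnorm {ι : Type*} [Fintype ι] (M : Matrix ι ι ℝ) (x : ι → ℝ) : ℝ :=
  Real.sqrt (x ⬝ᵥ M.mulVec x)

section QuadraticForm

variable {ι : Type*} [Fintype ι]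

theorem HasDerivAt.dotProduct {f g : ℝ → ι → ℝ} {f' g' : ι → ℝ} {t : ℝ}
    (hf : HasDerivAt f f' t) (hg : HasDerivAt g g' t) :
    HasDerivAt (fun s => f s ⬝ᵥ g s) (f' ⬝ᵥ g t + f t ⬝ᵥ g') t :=
  (HasDerivAt.fun_sum fun i _ =>
    (hasDerivAt_pi.mp hf i).fun_mul (hasDerivAt_pi.mp hg i)).congr_deriv
      (by rw [Finset.sum_add_distrib]; rfl)

theorem HasDerivAt.mulVec {m : Type*} [Fintype m] (M : Matrix m ι ℝ) {f : ℝ → ι → ℝ}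
    {f' : ι → ℝ} {t : ℝ}
    (hf : HasDerivAt f f' t) : HasDerivAt (fun s => M *ᵥ f s) (M *ᵥ f') t :=
  M.mulVecLin.toContinuousLinearMap.hasFDerivAt.comp_hasDerivAt t hf

theorem HasDerivAt.dotProduct_mulVec_self (M : Matrix ι ι ℝ) {B : Matrix ι ι ℝ}
    {e : ℝ → ι → ℝ} {t : ℝ} (he : HasDerivAt e (B *ᵥ e t) t) :
    HasDerivAt (fun s => e s ⬝ᵥ M *ᵥ e s) (e t ⬝ᵥ (Bᵀ * M + M * B) *ᵥ e t) t := by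
  convert he.dotProduct (he.mulVec M) using 1
  rw [add_mulVec, dotProduct_add, ← mulVec_mulVec, ← mulVec_mulVec, dotProduct_mulVec,
    vecMul_transpose]

theorem Matrix.PosSemidef.dotProduct_mulVec_le {N P : Matrix ι ι ℝ} (h : (N - P).PosSemidef)
    (x : ι → ℝ) : x ⬝ᵥ P *ᵥ x ≤ x ⬝ᵥ N *ᵥ x := by
  have := h.dotProduct_mulVec_nonneg x
  simp only [sub_mulVec, dotProduct_sub, star_trivial] at this
  linarith

end QuadraticForm

theorem le_mul_exp_of_hasDerivAt_le_mul {f f' : ℝ → ℝ} {K a : ℝ}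
    (hf : ∀ t ≥ a, HasDerivAt f (f' t) t) (bound : ∀ t ≥ a, f' t ≤ K * f t) {t : ℝ}
    (ht : a ≤ t) : f t ≤ f a * exp (K * (t - a)) := by
  have hcont : ContinuousOn f (Icc a t) := fun s hs =>
    (hf s hs.1).continuousAt.continuousWithinAt
  simpa only [gronwallBound_ε0] using
    le_gronwallBound_of_liminf_deriv_right_le (K := K) (ε := 0) hcont
      (fun s hs _ hr => (hf s hs.1).hasDerivWithinAt.liminf_right_slope_le hr) le_rfl
      (fun s hs => by rw [add_zero]; exact bound s hs.1) t ⟨ht, le_rfl⟩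

theorem reduced_order_observer_convergence_general
    {nv nw : ℕ}
    (A : (Fin nv → ℝ) → Matrix (Fin nw) (Fin nw) ℝ)
    (b : (Fin nv → ℝ) → (Fin nw → ℝ))
    (Mw : Matrix (Fin nw) (Fin nw) ℝ)
    (lw : ℝ)
    (hcontr : ∀ v : Fin nv → ℝ,
      (-(lw • Mw) - ((A v)ᵀ * Mw + Mw * A v)).PosSemidef)
    (v : ℝ → Fin nv → ℝ)
    (w what : ℝ → Fin nw → ℝ)
    (hw : ∀ t ≥ (0:ℝ), HasDerivAt w ((A (v t)).mulVec (w t) + b (v t)) t)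
    (hwhat : ∀ t ≥ (0:ℝ), HasDerivAt what ((A (v t)).mulVec (what t) + b (v t)) t) :
    ∀ t ≥ (0:ℝ), qnorm Mw (what t - w t) ≤ exp (-(lw / 2) * t) * qnorm Mw (what 0 - w 0) := by
  have herr (s : ℝ) (hs : 0 ≤ s) :
      HasDerivAt (fun s => what s - w s) (A (v s) *ᵥ (what s - w s)) s := by
    refine ((hwhat s hs).sub (hw s hs)).congr_deriv ?_
    rw [mulVec_sub]
    abel
  have hdecay (t : ℝ) (ht : 0 ≤ t) : (what t - w t) ⬝ᵥ Mw *ᵥ (what t - w t) ≤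
      (what 0 - w 0) ⬝ᵥ Mw *ᵥ (what 0 - w 0) * exp (-lw * t) := by
    simpa only [sub_zero] using le_mul_exp_of_hasDerivAt_le_mul (K := -lw)
      (fun s hs => (herr s hs).dotProduct_mulVec_self Mw)
      (fun s _ => by
        simpa only [neg_mulVec, smul_mulVec, dotProduct_neg, dotProduct_smul, smul_eq_mul,
          neg_mul] using (hcontr (v s)).dotProduct_mulVec_le (what s - w s)) ht
  intro t ht
  calc qnorm Mw (what t - w t)
      ≤ √((what 0 - w 0) ⬝ᵥ Mw *ᵥ (what 0 - w 0) * exp (-lw * t)) :=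
        Real.sqrt_le_sqrt (hdecay t ht)
    _ = exp (-(lw / 2) * t) * qnorm Mw (what 0 - w 0) := by
      rw [Real.sqrt_mul' _ (exp_nonneg _), ← Real.exp_half, qnorm, mul_comm]
      ring_nf

/-- if the internal dynamics `ẇ = A(v)w + b(v)` satisfies the matrix
contraction inequality `A(v)ᵀM_w + M_wA(v) ⪯ −λ_w M_w`, then any two solutions (for the
same continuous input `v`) converge to each other exponentially in the `M_w`-weighted norm;
in particular the copy system is a globally exponentially convergent reduced-order observer. -/
theorem reduced_order_observer_convergence
    {nv nw : ℕ}
    (A : (Fin nv → ℝ) → Matrix (Fin nw) (Fin nw) ℝ)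
    (b : (Fin nv → ℝ) → (Fin nw → ℝ))
    (hA : Continuous A) (hb : Continuous b)
    (Mw : Matrix (Fin nw) (Fin nw) ℝ) (hMw : Mw.PosDef)
    (lw : ℝ) (hlw : 0 < lw)
    (hcontr : ∀ v : Fin nv → ℝ,
      (-(lw • Mw) - ((A v)ᵀ * Mw + Mw * A v)).PosSemidef)
    (v : ℝ → Fin nv → ℝ) (hv : ContinuousOn v (Ici 0))
    (w what : ℝ → Fin nw → ℝ)
    (hw : ∀ t ≥ (0:ℝ), HasDerivAt w ((A (v t)).mulVec (w t) + b (v t)) t)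
    (hwhat : ∀ t ≥ (0:ℝ), HasDerivAt what ((A (v t)).mulVec (what t) + b (v t)) t) :
    ∀ t ≥ (0:ℝ), qnorm Mw (what t - w t) ≤ exp (-(lw / 2) * t) * qnorm Mw (what 0 - w 0) :=
  reduced_order_observer_convergence_general A b Mw lw hcontr v w what hw hwhat
end

section
/- Let γ > 0, α > 0. Let v : [0,∞) → ℝ^{n_v} and u : [0,∞) → ℝ^{n_u} be continuous, and let Φ, a be continuously differentiable (matrix- and vector-valued) functions and A, b continuously differentiable functions defining the internal dynamics. Suppose (v̂, ŵ, θ̂, Ψ, P) solve on [0,∞) the adaptive-observer equations: v̂̇ = Φ(v,ŵ,u)θ̂ + a(v,ŵ,u) + (γI + ΨPΨᵀ)(v−v̂); ŵ̇ = A(v)ŵ + b(v); θ̂̇ = γPΨᵀ(v−v̂); Ψ̇ = −γΨ + γΦ(v,ŵ,u) with Ψ(0) = 0; Ṗ = αP − PΨᵀΨP with P(0) symmetric positive definite. Define the filtered signals ξ and η_f by ξ̇ = −γξ + γv with ξ(0) = v̂(0), and η̇_f = −γη_f + γ·a(v(t),ŵ(t),u(t)) with η_f(0) = 0. Then for all t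 ≥ 0: γ(v(t) − ξ(t)) − Ψ(t)θ̂(t) − η_f(t) = γ(v(t) − v̂(t)). Consequently, θ̂ satisfies the recursive-least-squares update θ̂̇(t) = P(t)Ψ(t)ᵀ·(γ(v(t)−ξ(t)) − Ψ(t)θ̂(t) − η_f(t)). -/
open Matrix Real Set

/-! The two sides of the identity differ by `e = γ (v̂ - ξ) - Ψ θ̂ - η_f`. Along the observer,
`ė = -γ e`, and `e 0 = 0` because `ξ 0 = v̂ 0`, `Ψ 0 = 0`, `η_f 0 = 0`; so `e` vanishes
identically. The RLS form of `θ̂̇` is then the observer equation for `θ̂` rewritten. -/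

theorem hasDerivAt_mulVec {m n : Type*} [Fintype n] {M : ℝ → Matrix m n ℝ}
    {M' : Matrix m n ℝ} {x : ℝ → n → ℝ} {x' : n → ℝ} {t : ℝ}
    (hM : ∀ i j, HasDerivAt (fun s => M s i j) (M' i j) t) (hx : HasDerivAt x x' t) :
    HasDerivAt (fun s => M s *ᵥ x s) (M' *ᵥ x t + M t *ᵥ x') t := by
  refine hasDerivAt_pi.2 fun i => ?_
  have hsum := HasDerivAt.fun_sum fun j (_ : j ∈ Finset.univ) =>
    (hM i j).fun_mul (hasDerivAt_pi.1 hx j)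
  simpa only [mulVec, dotProduct, Pi.add_apply, Finset.sum_add_distrib] using hsum

theorem eq_exp_smul_of_hasDerivAt_smul {E : Type*} [NormedAddCommGroup E] [NormedSpace ℝ E]
    {f : ℝ → E} {c : ℝ} (hf : ∀ s ≥ (0:ℝ), HasDerivAt f (c • f s) s) :
    ∀ t ≥ (0:ℝ), f t = exp (c * t) • f 0 := by
  intro t ht
  set g : ℝ → E := fun s => exp (-(c * s)) • f s
  have hg : ∀ s ≥ (0:ℝ), HasDerivAt g 0 s := by
    intro s hs
    have hexp : HasDerivAt (fun r => exp (-(c * r))) (exp (-(c * s)) * -c) s := by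
      simpa using ((hasDerivAt_id s).const_mul c).neg.exp
    refine (hexp.smul (hf s hs)).congr_deriv ?_
    rw [smul_smul, mul_neg, neg_smul, mul_comm, mul_smul, add_neg_cancel]
  have hconst : g t = g 0 :=
    constant_of_has_deriv_right_zero (fun s hs => (hg s hs.1).continuousAt.continuousWithinAt)
      (fun s hs => (hg s hs.1).hasDerivWithinAt) t ⟨ht, le_rfl⟩
  simp only [g, mul_zero, neg_zero, exp_zero, one_smul] at hconst
  rw [← hconst, smul_smul, ← exp_add, add_neg_cancel, exp_zero, one_smul]

/-- The term `Ψ P Ψᵀ (v - v̂)` of `v̂̇` cancels against `Ψ θ̂̇`, and `Φ θ̂`, `a` cancel against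
`Ψ̇ θ̂` and `η̇_f`. -/
theorem hasDerivAt_observer_error {m n : Type*} [Fintype m] [Fintype n] {γ s : ℝ}
    {v a : m → ℝ} {Φ : Matrix m n ℝ} {P : Matrix n n ℝ}
    {vhat ξ ηf : ℝ → m → ℝ} {θ : ℝ → n → ℝ} {Ψ : ℝ → Matrix m n ℝ}
    (hvhat : HasDerivAt vhat
      (Φ *ᵥ θ s + a + (γ • (v - vhat s) + (Ψ s * P * (Ψ s)ᵀ) *ᵥ (v - vhat s))) s)
    (hθ : HasDerivAt θ (γ • (P * (Ψ s)ᵀ) *ᵥ (v - vhat s)) s)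
    (hΨ : ∀ i j, HasDerivAt (fun r => Ψ r i j) ((-(γ • Ψ s) + γ • Φ) i j) s)
    (hξ : HasDerivAt ξ (-(γ • ξ s) + γ • v) s)
    (hηf : HasDerivAt ηf (-(γ • ηf s) + γ • a) s) :
    HasDerivAt (fun r => γ • (vhat r - ξ r) - Ψ r *ᵥ θ r - ηf r)
      ((-γ) • (γ • (vhat s - ξ s) - Ψ s *ᵥ θ s - ηf s)) s := by
  refine ((((hvhat.sub hξ).const_smul γ).sub (hasDerivAt_mulVec hΨ hθ)).sub hηf).congr_deriv ?_
  simp only [add_mulVec, neg_mulVec, smul_mulVec, mulVec_smul, ← mulVec_mulVec,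
    Matrix.mul_assoc, smul_sub, smul_add, smul_neg]
  module

theorem adaptive_observer_rls_identity_general
    {nv nw nu nθ : ℕ} (γ : ℝ)
    -- model functions (continuously differentiable)
    (Φ : (Fin nv → ℝ) → (Fin nw → ℝ) → (Fin nu → ℝ) → Matrix (Fin nv) (Fin nθ) ℝ)
    (a : (Fin nv → ℝ) → (Fin nw → ℝ) → (Fin nu → ℝ) → (Fin nv → ℝ))
    -- continuous external signals
    (v : ℝ → Fin nv → ℝ) (u : ℝ → Fin nu → ℝ)
    -- observer state
    (vhat : ℝ → Fin nv → ℝ) (what : ℝ → Fin nw → ℝ) (thetah : ℝ → Fin nθ → ℝ)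
    (Ψ : ℝ → Matrix (Fin nv) (Fin nθ) ℝ) (P : ℝ → Matrix (Fin nθ) (Fin nθ) ℝ)
    -- the adaptive observer equations
    (hvhat : ∀ t ≥ (0:ℝ), HasDerivAt vhat
      ((Φ (v t) (what t) (u t)).mulVec (thetah t) + a (v t) (what t) (u t)
        + (γ • (v t - vhat t) + (Ψ t * P t * (Ψ t)ᵀ).mulVec (v t - vhat t))) t)
    (hthetah : ∀ t ≥ (0:ℝ), HasDerivAt thetah
      (γ • (P t * (Ψ t)ᵀ).mulVec (v t - vhat t)) t)
    (hΨ : ∀ t ≥ (0:ℝ), ∀ i j, HasDerivAt (fun s => Ψ s i j)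
      ((-(γ • Ψ t) + γ • Φ (v t) (what t) (u t)) i j) t)
    (hΨ0 : Ψ 0 = 0)
    -- the filtered signals ξ = Hv and η_f = Ha
    (ξ : ℝ → Fin nv → ℝ) (ηf : ℝ → Fin nv → ℝ)
    (hξ : ∀ t ≥ (0:ℝ), HasDerivAt ξ (-(γ • ξ t) + γ • v t) t) (hξ0 : ξ 0 = vhat 0)
    (hηf : ∀ t ≥ (0:ℝ), HasDerivAt ηf (-(γ • ηf t) + γ • a (v t) (what t) (u t)) t)
    (hηf0 : ηf 0 = 0) :
    ∀ t ≥ (0:ℝ),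
      γ • (v t - ξ t) - (Ψ t).mulVec (thetah t) - ηf t = γ • (v t - vhat t)
      ∧ HasDerivAt thetah
          ((P t * (Ψ t)ᵀ).mulVec (γ • (v t - ξ t) - (Ψ t).mulVec (thetah t) - ηf t)) t := by
  intro t ht
  have herror : γ • (vhat t - ξ t) - Ψ t *ᵥ thetah t - ηf t = 0 := by
    have hdecay := eq_exp_smul_of_hasDerivAt_smul (c := -γ) (fun s hs =>
      hasDerivAt_observer_error (hvhat s hs) (hthetah s hs) (hΨ s hs) (hξ s hs)
        (hηf s hs)) t ht
    simpa only [hξ0, hΨ0, hηf0, sub_self, smul_zero, zero_mulVec, sub_zero, smul_zero]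
      using hdecay
  have hidentity : γ • (v t - ξ t) - Ψ t *ᵥ thetah t - ηf t = γ • (v t - vhat t) := by
    calc γ • (v t - ξ t) - Ψ t *ᵥ thetah t - ηf t
        = γ • (v t - vhat t) + (γ • (vhat t - ξ t) - Ψ t *ᵥ thetah t - ηf t) := by module
      _ = γ • (v t - vhat t) := by rw [herror, add_zero]
  refine ⟨hidentity, ?_⟩
  rw [hidentity, mulVec_smul]
  exact hthetah t ht

/-- key identity behind Proposition 3 of the paper: along solutions of
the RLS-based adaptive observer, the filtered regression error equals the injected output
error, `γ(v − Hv) − Ψθ̂ − Ha = γ(v − v̂)`; consequently `θ̂` satisfies the RLS update. -/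
theorem adaptive_observer_rls_identity
    {nv nw nu nθ : ℕ} (γ α : ℝ) (hγ : 0 < γ) (hα : 0 < α)
    -- model functions (continuously differentiable)
    (Φ : (Fin nv → ℝ) → (Fin nw → ℝ) → (Fin nu → ℝ) → Matrix (Fin nv) (Fin nθ) ℝ)
    (a : (Fin nv → ℝ) → (Fin nw → ℝ) → (Fin nu → ℝ) → (Fin nv → ℝ))
    (A : (Fin nv → ℝ) → Matrix (Fin nw) (Fin nw) ℝ)
    (b : (Fin nv → ℝ) → (Fin nw → ℝ))
    (hΦ : ∀ i j, ContDiff ℝ 1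
      (fun p : (Fin nv → ℝ) × (Fin nw → ℝ) × (Fin nu → ℝ) => Φ p.1 p.2.1 p.2.2 i j))
    (ha : ContDiff ℝ 1
      (fun p : (Fin nv → ℝ) × (Fin nw → ℝ) × (Fin nu → ℝ) => a p.1 p.2.1 p.2.2))
    (hA : ∀ i j, ContDiff ℝ 1 (fun v => A v i j))
    (hb : ContDiff ℝ 1 b)
    -- continuous external signals
    (v : ℝ → Fin nv → ℝ) (u : ℝ → Fin nu → ℝ)
    (hv : ContinuousOn v (Ici 0)) (hu : ContinuousOn u (Ici 0))
    -- observer state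
    (vhat : ℝ → Fin nv → ℝ) (what : ℝ → Fin nw → ℝ) (thetah : ℝ → Fin nθ → ℝ)
    (Ψ : ℝ → Matrix (Fin nv) (Fin nθ) ℝ) (P : ℝ → Matrix (Fin nθ) (Fin nθ) ℝ)
    -- the adaptive observer equations
    (hvhat : ∀ t ≥ (0:ℝ), HasDerivAt vhat
      ((Φ (v t) (what t) (u t)).mulVec (thetah t) + a (v t) (what t) (u t)
        + (γ • (v t - vhat t) + (Ψ t * P t * (Ψ t)ᵀ).mulVec (v t - vhat t))) t)
    (hwhat : ∀ t ≥ (0:ℝ), HasDerivAt what ((A (v t)).mulVec (what t) + b (v t)) t)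
    (hthetah : ∀ t ≥ (0:ℝ), HasDerivAt thetah
      (γ • (P t * (Ψ t)ᵀ).mulVec (v t - vhat t)) t)
    (hΨ : ∀ t ≥ (0:ℝ), ∀ i j, HasDerivAt (fun s => Ψ s i j)
      ((-(γ • Ψ t) + γ • Φ (v t) (what t) (u t)) i j) t)
    (hΨ0 : Ψ 0 = 0)
    (hP : ∀ t ≥ (0:ℝ), ∀ i j, HasDerivAt (fun s => P s i j)
      ((α • P t - P t * (Ψ t)ᵀ * Ψ t * P t) i j) t)
    (hP0 : (P 0).PosDef)
    -- the filtered signals ξ = Hv and η_f = Ha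
    (ξ : ℝ → Fin nv → ℝ) (ηf : ℝ → Fin nv → ℝ)
    (hξ : ∀ t ≥ (0:ℝ), HasDerivAt ξ (-(γ • ξ t) + γ • v t) t) (hξ0 : ξ 0 = vhat 0)
    (hηf : ∀ t ≥ (0:ℝ), HasDerivAt ηf (-(γ • ηf t) + γ • a (v t) (what t) (u t)) t)
    (hηf0 : ηf 0 = 0) :
    ∀ t ≥ (0:ℝ),
      γ • (v t - ξ t) - (Ψ t).mulVec (thetah t) - ηf t = γ • (v t - vhat t)
      ∧ HasDerivAt thetah
          ((P t * (Ψ t)ᵀ).mulVec (γ • (v t - ξ t) - (Ψ t).mulVec (thetah t) - ηf t)) t :=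
  adaptive_observer_rls_identity_general γ Φ a v u vhat what thetah Ψ P hvhat hthetah hΨ hΨ0 ξ ηf hξ
    hξ0 hηf hηf0
end

section
/- Let α > 0 and let Ψ : [0,∞) → ℝ^{n×m} be continuous such that Ψ(t)ᵀ is persistently exciting with constants T > 0, δ > 0, i.e. ∫_t^{t+T} Ψ(τ)ᵀΨ(τ) dτ ⪰ δI for all t ≥ 0. Let R(0) be symmetric positive definite and define R(t) := e^{−αt}R(0) + ∫₀ᵗ e^{−α(t−τ)} Ψ(τ)ᵀΨ(τ) dτ (the solution of Ṙ = −αR + ΨᵀΨ). Then R(t) is symmetric positive definite for all t ≥ 0, R(t) ⪰ e^{−αt}R(0) for t ∈ [0,T], and R(t) ⪰ δ·e^{−2αT}·I for all t ≥ T. -/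
/-!
The weights `e^{-α(t-τ)}` are positive and `ΨᵀΨ ⪰ 0`, so `R(t) ⪰ e^{-αt} R(0) ≻ 0`. For `t ≥ T`
keep only the last window `[t - T, t]` of the integral: there the weight is at least `e^{-αT}`,
and persistent excitation on that window gives `R(t) ⪰ δ e^{-αT} I ⪰ δ e^{-2αT} I`.
-/

open Matrix Real Set MeasureTheory

theorem exp_mul_intervalIntegral_le_intervalIntegral_exp_mul {f : ℝ → ℝ} {α T t : ℝ}
    (hα : 0 ≤ α) (hT : 0 ≤ T) (hTt : T ≤ t) (hf : IntervalIntegrable f volume 0 t)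
    (hf0 : ∀ τ, 0 ≤ f τ) :
    exp (-α * T) * ∫ τ in (t - T)..t, f τ ≤ ∫ τ in (0:ℝ)..t, exp (-α * (t - τ)) * f τ := by
  have hweighted : IntervalIntegrable (fun τ => exp (-α * (t - τ)) * f τ) volume 0 t :=
    hf.continuousOn_mul (by fun_prop)
  have hwindow : IntervalIntegrable f volume (t - T) t :=
    hf.mono_set <| uIcc_subset_uIcc_right <| by
      rw [uIcc_of_le (hT.trans hTt)]; constructor <;> linarith
  calc exp (-α * T) * ∫ τ in (t - T)..t, f τ
      = ∫ τ in (t - T)..t, exp (-α * T) * f τ := (intervalIntegral.integral_const_mul _ _).symm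
    _ ≤ ∫ τ in (t - T)..t, exp (-α * (t - τ)) * f τ := by
        refine intervalIntegral.integral_mono_on (by linarith) (hwindow.const_mul _)
          (hwindow.continuousOn_mul (by fun_prop)) fun τ hτ => ?_
        exact mul_le_mul_of_nonneg_right (exp_le_exp.2 (by nlinarith [hτ.1])) (hf0 τ)
    _ ≤ ∫ τ in (0:ℝ)..t, exp (-α * (t - τ)) * f τ :=
        intervalIntegral.integral_mono_interval (by linarith) (by linarith) le_rfl
          (Filter.Eventually.of_forall fun τ => mul_nonneg (exp_nonneg _) (hf0 τ)) hweighted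

namespace Matrix

variable {ι : Type*}

theorem isHermitian_of_intervalIntegral {F : ℝ → Matrix ι ι ℝ} (hF : ∀ τ, (F τ).IsHermitian)
    (a b : ℝ) : (of fun i j => ∫ τ in a..b, F τ i j).IsHermitian :=
  IsHermitian.ext fun i j => by
    simpa only [of_apply, star_trivial] using
      intervalIntegral.integral_congr fun τ _ => by simpa using (hF τ).apply i j

theorem PosSemidef.sub_smul_one_of_le [DecidableEq ι] {A : Matrix ι ι ℝ} {c c' : ℝ}
    (hA : (A - c • 1).PosSemidef) (hc : c' ≤ c) : (A - c' • 1).PosSemidef := by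
  have hsplit : A - c' • 1 = (A - c • 1) + (c - c') • 1 := by module
  exact hsplit ▸ hA.add (PosSemidef.one.smul (sub_nonneg.2 hc))

variable [Fintype ι]

theorem dotProduct_of_intervalIntegral_mulVec {F : ℝ → Matrix ι ι ℝ} {a b : ℝ}
    (hF : ∀ i j, IntervalIntegrable (fun τ => F τ i j) volume a b) (x : ι → ℝ) :
    x ⬝ᵥ (of (fun i j => ∫ τ in a..b, F τ i j) *ᵥ x) = ∫ τ in a..b, x ⬝ᵥ (F τ *ᵥ x) := by
  have hterm : ∀ i j, IntervalIntegrable (fun τ => x i * (F τ i j * x j)) volume a b :=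
    fun i j => ((hF i j).mul_const _).const_mul _
  simp only [dotProduct, mulVec, of_apply, Finset.mul_sum]
  rw [intervalIntegral.integral_finsetSum fun i _ => by
    simpa only [Finset.sum_fn] using IntervalIntegrable.sum Finset.univ fun j _ => hterm i j]
  refine Finset.sum_congr rfl fun i _ => ?_
  rw [intervalIntegral.integral_finsetSum fun j _ => hterm i j]
  refine Finset.sum_congr rfl fun j _ => ?_
  rw [intervalIntegral.integral_const_mul, intervalIntegral.integral_mul_const]

theorem posSemidef_of_intervalIntegral {F : ℝ → Matrix ι ι ℝ} {a b : ℝ} (hab : a ≤ b)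
    (hF : ∀ τ, (F τ).PosSemidef)
    (hFint : ∀ i j, IntervalIntegrable (fun τ => F τ i j) volume a b) :
    (of fun i j => ∫ τ in a..b, F τ i j).PosSemidef :=
  .of_dotProduct_mulVec_nonneg (isHermitian_of_intervalIntegral (fun τ => (hF τ).isHermitian) a b)
    fun x => by
      rw [star_trivial, dotProduct_of_intervalIntegral_mulVec hFint]
      exact intervalIntegral.integral_nonneg hab fun τ _ => by
        simpa using (hF τ).dotProduct_mulVec_nonneg x

theorem posSemidef_sub_smul_one_iff [DecidableEq ι] {A : Matrix ι ι ℝ} (hA : A.IsHermitian)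
    (c : ℝ) : (A - c • 1).PosSemidef ↔ ∀ x, c * (x ⬝ᵥ x) ≤ x ⬝ᵥ (A *ᵥ x) := by
  have hquad : ∀ x, x ⬝ᵥ ((A - c • 1) *ᵥ x) = x ⬝ᵥ (A *ᵥ x) - c * (x ⬝ᵥ x) := fun x => by
    rw [sub_mulVec, dotProduct_sub, smul_mulVec, one_mulVec, dotProduct_smul, smul_eq_mul]
  simp only [posSemidef_iff_dotProduct_mulVec, star_trivial, hquad, sub_nonneg,
    and_iff_right (hA.sub (isHermitian_one.smul (IsSelfAdjoint.all c)))]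

theorem posSemidef_transpose_mul_self {κ : Type*} [Fintype κ] (A : Matrix κ ι ℝ) :
    (Aᵀ * A).PosSemidef := by
  simpa using posSemidef_conjTranspose_mul_self A

theorem posSemidef_intervalIntegral_exp_mul_sub_smul_one [DecidableEq ι]
    {Q : ℝ → Matrix ι ι ℝ} (hQ : Continuous Q) (hQpsd : ∀ τ, (Q τ).PosSemidef)
    {α T t δ : ℝ} (hα : 0 ≤ α) (hT : 0 ≤ T) (hTt : T ≤ t)
    (hPE : ((of fun i j => ∫ τ in (t - T)..t, Q τ i j) - δ • 1).PosSemidef) :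
    ((of fun i j => ∫ τ in (0:ℝ)..t, exp (-α * (t - τ)) * Q τ i j)
      - (exp (-α * T) * δ) • 1).PosSemidef := by
  have hQint : ∀ (w : ℝ → ℝ), Continuous w → ∀ a b i j,
      IntervalIntegrable (fun τ => w τ * Q τ i j) volume a b := fun w hw a b i j =>
    (hw.mul (hQ.matrix_elem i j)).intervalIntegrable a b
  rw [posSemidef_sub_smul_one_iff (isHermitian_of_intervalIntegral (fun τ => (hQpsd τ).1) _ _)]
    at hPE
  refine (posSemidef_sub_smul_one_iff (isHermitian_of_intervalIntegral
    (F := fun τ => exp (-α * (t - τ)) • Q τ) (fun τ => ((hQpsd τ).smul (exp_pos _).le).1) _ _)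
    _).2 fun x => ?_
  have hq0 : ∀ τ, 0 ≤ x ⬝ᵥ (Q τ *ᵥ x) := fun τ => by
    simpa using (hQpsd τ).dotProduct_mulVec_nonneg x
  have hwindow := hPE x
  rw [dotProduct_of_intervalIntegral_mulVec (by simpa using hQint 1 continuous_const _ _)]
    at hwindow
  calc exp (-α * T) * δ * (x ⬝ᵥ x)
      ≤ exp (-α * T) * ∫ τ in (t - T)..t, x ⬝ᵥ (Q τ *ᵥ x) := by
        rw [mul_assoc]; gcongr
    _ ≤ ∫ τ in (0:ℝ)..t, exp (-α * (t - τ)) * (x ⬝ᵥ (Q τ *ᵥ x)) :=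
        exp_mul_intervalIntegral_le_intervalIntegral_exp_mul hα hT hTt
          ((by fun_prop : Continuous fun τ => x ⬝ᵥ (Q τ *ᵥ x)).intervalIntegrable 0 t) hq0
    _ = _ := by
        rw [dotProduct_of_intervalIntegral_mulVec (F := fun τ => exp (-α * (t - τ)) • Q τ)
          (hQint _ (by fun_prop) 0 t)]
        simp only [smul_mulVec, dotProduct_smul, smul_eq_mul]

end Matrix

/-- under persistent excitation of `Ψᵀ`, the exponentially weighted
information matrix `R(t) = e^{−αt}R(0) + ∫₀ᵗ e^{−α(t−τ)}Ψ(τ)ᵀΨ(τ)dτ` is positive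
definite, bounded below by `e^{−αt}R(0)` on `[0,T]` and by `δe^{−2αT}·I` for `t ≥ T`. -/
theorem information_matrix_lower_bound
    {n m : ℕ} (α T δ : ℝ) (hα : 0 < α) (hT : 0 < T) (hδ : 0 < δ)
    (Ψ : ℝ → Matrix (Fin n) (Fin m) ℝ) (hΨcont : Continuous Ψ)
    -- persistent excitation of Ψᵀ
    (hPE : ∀ t ≥ (0:ℝ),
      ((Matrix.of fun i j => ∫ τ in t..(t + T), ((Ψ τ)ᵀ * Ψ τ) i j)
        - δ • (1 : Matrix (Fin m) (Fin m) ℝ)).PosSemidef)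
    (R0 : Matrix (Fin m) (Fin m) ℝ) (hR0 : R0.PosDef)
    (R : ℝ → Matrix (Fin m) (Fin m) ℝ)
    (hR : ∀ t, R t = exp (-α * t) • R0 +
      Matrix.of (fun i j => ∫ τ in (0:ℝ)..t, exp (-α * (t - τ)) * ((Ψ τ)ᵀ * Ψ τ) i j)) :
    (∀ t ≥ (0:ℝ), (R t).PosDef)
    ∧ (∀ t ∈ Icc (0:ℝ) T, (R t - exp (-α * t) • R0).PosSemidef)
    ∧ (∀ t ≥ T, (R t - (δ * exp (-2 * α * T)) • (1 : Matrix (Fin m) (Fin m) ℝ)).PosSemidef) := by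
  have hQcont : Continuous fun τ => (Ψ τ)ᵀ * Ψ τ := hΨcont.matrix_transpose.matrix_mul hΨcont
  have hQpsd : ∀ τ, ((Ψ τ)ᵀ * Ψ τ).PosSemidef := fun τ => posSemidef_transpose_mul_self (Ψ τ)
  have hM : ∀ t ≥ (0:ℝ), (of fun i j =>
      ∫ τ in (0:ℝ)..t, exp (-α * (t - τ)) * ((Ψ τ)ᵀ * Ψ τ) i j).PosSemidef := fun t ht =>
    posSemidef_of_intervalIntegral (F := fun τ => exp (-α * (t - τ)) • ((Ψ τ)ᵀ * Ψ τ)) ht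
      (fun τ => (hQpsd τ).smul (exp_pos _).le)
      fun i j => ((by fun_prop : Continuous fun τ => exp (-α * (t - τ))).smul hQcont
        |>.matrix_elem i j).intervalIntegrable 0 t
  have hRpos : ∀ t ≥ (0:ℝ), (R t).PosDef := fun t ht =>
    hR t ▸ (hR0.smul (exp_pos _)).add_posSemidef (hM t ht)
  refine ⟨hRpos, fun t ht => by rw [hR t, add_sub_cancel_left]; exact hM t ht.1, fun t ht => ?_⟩
  have hwindow := posSemidef_intervalIntegral_exp_mul_sub_smul_one hQcont hQpsd hα.le hT.le ht
    (by simpa using hPE (t - T) (by linarith))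
  rw [hR t, add_sub_assoc]
  refine (hR0.posSemidef.smul (exp_pos _).le).add (hwindow.sub_smul_one_of_le ?_)
  rw [mul_comm δ]
  exact mul_le_mul_of_nonneg_right (exp_le_exp.2 (by nlinarith)) hδ.le
end

section
/- In the Hodgkin–Huxley sodium current I_Na(v,m,h) = μ_Na·m³·h·(v−ν_Na) with μ_Na > 0, and sodium activation dynamics ṁ = f_m(v,m) := (−m + σ_m(v))/τ_m(v), where σ_m(v) = 1/(1+exp(−(v−ρ)/κ)) is a sigmoid with κ > 0 and τ_m is a bell-shaped time-constant function (so τ_m(v) > 0 for all v), the following holds: for every v < ν_Na and every h > 0, at the activation equilibrium m = σ_m(v) one has (−∂_m I_Na(v,m,h)) · (∂_v f_m(v,m)) > 0; that is, the sodium current introduces positive feedback to the membrane voltage at any admissible equilibrium with v < ν_Na. -/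
/-!
At the equilibrium `m = σ_m(v)` the numerator of `f_m` vanishes, so `∂_v f_m = σ_m'(v) / τ_m(v)`
whatever the shape of `τ_m`; this is positive because the sigmoid is increasing for `κ > 0`
and `τ_m > 0`. On the other side `−∂_m I_Na = 3 μ_Na m² h (ν_Na − v) > 0` for `v < ν_Na`.
-/

open Real Filter Topology

theorem HasDerivAt.div_of_apply_eq_zero {𝕜 : Type*} [NontriviallyNormedField 𝕜]
    {c d : 𝕜 → 𝕜} {c' x : 𝕜} (hc : HasDerivAt c c' x) (hcx : c x = 0)
    (hd : ContinuousAt d x) (hdx : d x ≠ 0) :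
    HasDerivAt (fun y => c y / d y) (c' / d x) x := by
  rw [hasDerivAt_iff_tendsto_slope] at hc ⊢
  refine (hc.div (hd.tendsto.mono_left nhdsWithin_le_nhds) hdx).congr fun y => ?_
  rw [Pi.div_apply, slope_def_field, slope_def_field, hcx, zero_div, sub_zero, sub_zero,
    div_right_comm]

theorem hasDerivAt_sigmoid_div_sub (ρ κ x : ℝ) :
    HasDerivAt (fun y => sigmoid ((y - ρ) / κ))
      (sigmoid ((x - ρ) / κ) * (1 - sigmoid ((x - ρ) / κ)) / κ) x := by
  have := (hasDerivAt_sigmoid _).comp x (((hasDerivAt_id x).sub_const ρ).div_const κ)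
  rwa [mul_one_div] at this

theorem sodium_current_positive_feedback_general
    (μNa νNa ρ κ ζ χ τlo τhi : ℝ)
    (hμNa : 0 < μNa) (hκ : 0 < κ) (hτlo : 0 < τlo) (hτle : τlo ≤ τhi)
    (σm τm : ℝ → ℝ)
    (hσm : ∀ x, σm x = 1 / (1 + exp (-(x - ρ) / κ)))
    (hτm : ∀ x, τm x = τlo + (τhi - τlo) * exp (-(x - ζ) ^ 2 / χ ^ 2)) :
    ∀ v < νNa, ∀ h > (0:ℝ),
      0 < (-(deriv (fun m : ℝ => μNa * m ^ 3 * h * (v - νNa)) (σm v)))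
            * deriv (fun v' : ℝ => (-(σm v) + σm v') / τm v') v := by
  intro v hv h hh
  have hσ : σm = fun x => sigmoid ((x - ρ) / κ) := by
    ext x; rw [hσm, sigmoid_def, one_div, neg_div]
  set s := sigmoid ((v - ρ) / κ)
  have hσ' : HasDerivAt σm (s * (1 - s) / κ) v := hσ ▸ hasDerivAt_sigmoid_div_sub ρ κ v
  have hτv : 0 < τm v := by
    rw [hτm]
    exact add_pos_of_pos_of_nonneg hτlo (mul_nonneg (sub_nonneg.2 hτle) (exp_pos _).le)
  have hτc : ContinuousAt τm v := by rw [funext hτm]; fun_prop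
  have hI : HasDerivAt (fun m : ℝ => μNa * m ^ 3 * h * (v - νNa))
      (μNa * (3 * σm v ^ 2) * h * (v - νNa)) (σm v) := by
    simpa using ((hasDerivAt_pow 3 (σm v)).const_mul μNa |>.mul_const h).mul_const (v - νNa)
  have hf := (hσ'.const_add (-(σm v))).div_of_apply_eq_zero (neg_add_cancel _) hτc hτv.ne'
  rw [hI.deriv, hf.deriv, neg_mul_eq_mul_neg, neg_sub]
  have hs : 0 < s := sigmoid_pos _
  have hs1 : 0 < 1 - s := sub_pos.2 (sigmoid_lt_one _)
  have hσv : 0 < σm v := by rw [hσ]; exact hs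
  have hνv : 0 < νNa - v := sub_pos.2 hv
  positivity

/-- Example 4 of the paper: the sodium current of the Hodgkin–Huxley
model introduces positive feedback to the membrane voltage: for `v < ν_Na`, `h > 0`, at
the activation equilibrium `m = σ_m(v)`, one has `(−∂_m I_Na)·(∂_v f_m) > 0`. -/
theorem sodium_current_positive_feedback
    (μNa νNa ρ κ ζ χ τlo τhi : ℝ)
    (hμNa : 0 < μNa) (hκ : 0 < κ) (hχ : χ ≠ 0) (hτlo : 0 < τlo) (hτle : τlo ≤ τhi)
    (σm τm : ℝ → ℝ)
    (hσm : ∀ x, σm x = 1 / (1 + exp (-(x - ρ) / κ)))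
    (hτm : ∀ x, τm x = τlo + (τhi - τlo) * exp (-(x - ζ) ^ 2 / χ ^ 2)) :
    ∀ v < νNa, ∀ h > (0:ℝ),
      0 < (-(deriv (fun m : ℝ => μNa * m ^ 3 * h * (v - νNa)) (σm v)))
            * deriv (fun v' : ℝ => (-(σm v) + σm v') / τm v') v :=
  sodium_current_positive_feedback_general μNa νNa ρ κ ζ χ τlo τhi hμNa hκ hτlo hτle σm τm hσm hτm
end
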